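/- Let P₀ and P₁ be probability measures, Φ a {0,1}-valued test with α = E_{P₀}[Φ] ∈ (0,1), α ≠ 1/2, and β = 1 − E_{P₁}[Φ]. Then α + β ≥ 1 − √((α − 1/2)/ln(α/(1−α)))·√(2·KL(P₁‖P₀)). -/

import Mathlib

/-!
By the Donsker–Varadhan inequality, `l (E₁Φ - α) - log E₀ exp (lΦ) ≤ KL(P₁‖P₀)` for every `l`.
The Kearns–Saul inequality bounds the log-moment generating function of a Bernoulli(α) variable
by `α l + σ₀² l² / 2`, and optimizing in `l` gives `(E₁Φ - α)² ≤ 2 σ₀² KL(P₁‖P₀)`.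

For Kearns–Saul, writing `1 - α + α eˡ` through `cosh` reduces the inequality to
`log cosh x - log cosh y ≤ (tanh y / 2y) (x² - y²)`: the function `log cosh x - c x² / 2` with
`c = tanh y / y` is maximal at `x = ±y` because `tanh x / x` decreases on `(0, ∞)`, which is the
concavity of `tanh` there.
-/

open Real Set

namespace Real

theorem hasDerivAt_tanh (x : ℝ) : HasDerivAt tanh (cosh x ^ 2)⁻¹ x := by
  have h := (hasDerivAt_sinh x).div (hasDerivAt_cosh x) (cosh_pos x).ne'
  rwa [show sinh / cosh = tanh from funext fun y => (tanh_eq_sinh_div_cosh y).symm, ← sq, ← sq,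
    cosh_sq_sub_sinh_sq, one_div] at h

theorem concaveOn_tanh : ConcaveOn ℝ (Ici 0) tanh := by
  refine AntitoneOn.concaveOn_of_deriv (convex_Ici 0)
    (fun x _ => (hasDerivAt_tanh x).continuousAt.continuousWithinAt)
    (fun x _ => (hasDerivAt_tanh x).differentiableAt.differentiableWithinAt) ?_
  rw [interior_Ici, funext fun x => (hasDerivAt_tanh x).deriv]
  intro x hx y hy hxy
  have hcosh : cosh x ≤ cosh y := cosh_le_cosh.mpr (by rwa [abs_of_pos hx, abs_of_pos hy])
  exact inv_anti₀ (pow_pos (cosh_pos x) 2) (pow_le_pow_left₀ (cosh_pos x).le hcosh 2)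

theorem antitoneOn_tanh_div : AntitoneOn (fun x => tanh x / x) (Ioi 0) := fun x hx y hy hxy => by
  have h := concaveOn_tanh.slope_anti (self_mem_Ici (a := (0 : ℝ)))
    ⟨mem_Ici.mpr (le_of_lt hx), ne_of_gt hx⟩ ⟨mem_Ici.mpr (le_of_lt hy), ne_of_gt hy⟩ hxy
  simpa [slope_def_field] using h

theorem hasDerivAt_log_cosh (x : ℝ) : HasDerivAt (fun t => log (cosh t)) (tanh x) x := by
  simpa [← tanh_eq_sinh_div_cosh] using (hasDerivAt_cosh x).log (cosh_pos x).ne'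

theorem log_cosh_sub_log_cosh_le_of_nonneg {x y : ℝ} (hx : 0 ≤ x) (hy : 0 < y) :
    log (cosh x) - log (cosh y) ≤ tanh y / (2 * y) * (x ^ 2 - y ^ 2) := by
  set c := tanh y / y
  set h : ℝ → ℝ := fun t => log (cosh t) - c * t ^ 2 / 2
  have hderiv (t : ℝ) : HasDerivAt h (tanh t - c * t) t :=
    (hasDerivAt_log_cosh t).sub ((hasDerivAt_pow 2 t).const_mul c |>.div_const 2)
      |>.congr_deriv (by ring)
  have hcont : Continuous h := continuous_iff_continuousAt.mpr fun t => (hderiv t).continuousAt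
  have hdiff : Differentiable ℝ h := fun t => (hderiv t).differentiableAt
  suffices h x ≤ h y by
    have e : tanh y / (2 * y) * (x ^ 2 - y ^ 2) = c * x ^ 2 / 2 - c * y ^ 2 / 2 := by
      simp only [c]
      field_simp
    simp only [h] at this
    linarith
  rcases le_total x y with hxy | hyx
  · refine monotoneOn_of_deriv_nonneg (convex_Icc 0 y) hcont.continuousOn hdiff.differentiableOn
      (fun t ht => ?_) ⟨hx, hxy⟩ ⟨hy.le, le_rfl⟩ hxy
    rw [interior_Icc] at ht
    have hc : c ≤ tanh t / t := antitoneOn_tanh_div ht.1 hy ht.2.le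
    rw [(hderiv t).deriv, sub_nonneg, ← le_div_iff₀ ht.1]
    exact hc
  · refine antitoneOn_of_deriv_nonpos (convex_Ici y) hcont.continuousOn hdiff.differentiableOn
      (fun t ht => ?_) self_mem_Ici hyx hyx
    rw [interior_Ici] at ht
    have ht0 : 0 < t := hy.trans ht
    have hc : tanh t / t ≤ c := antitoneOn_tanh_div hy ht0 ht.le
    rw [(hderiv t).deriv, sub_nonpos, ← div_le_iff₀ ht0]
    exact hc

theorem log_cosh_sub_log_cosh_le (x : ℝ) {y : ℝ} (hy : y ≠ 0) :
    log (cosh x) - log (cosh y) ≤ tanh y / (2 * y) * (x ^ 2 - y ^ 2) := by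
  have habs : tanh |y| / (2 * |y|) = tanh y / (2 * y) := by
    rcases abs_cases y with ⟨h, -⟩ | ⟨h, -⟩ <;> simp [h, tanh_neg, neg_div_neg_eq]
  simpa [cosh_abs, habs] using
    log_cosh_sub_log_cosh_le_of_nonneg (abs_nonneg x) (abs_pos.mpr hy)

theorem log_one_add_exp (m : ℝ) : log (1 + exp m) = m / 2 + log 2 + log (cosh (m / 2)) := by
  have h : 1 + exp m = exp (m / 2) * (2 * cosh (m / 2)) := by
    rw [cosh_eq, mul_div_cancel₀ _ two_ne_zero, mul_add, ← exp_add, ← exp_add]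
    ring_nf
    rw [exp_zero, add_comm]
  rw [h, log_mul (exp_pos _).ne' (by positivity), log_exp,
    log_mul two_ne_zero (cosh_pos _).ne', add_assoc]

theorem tanh_half (x : ℝ) : tanh (x / 2) = (exp x - 1) / (exp x + 1) := by
  have h : exp x = exp (x / 2) * exp (x / 2) := by rw [← exp_add, add_halves]
  rw [tanh_eq, exp_neg, h]
  have := exp_pos (x / 2)
  field_simp

end Real

noncomputable def bernoulliVarianceProxy (a : ℝ) : ℝ := (a - 1 / 2) / log (a / (1 - a))

theorem bernoulliVarianceProxy_pos {a : ℝ} (ha : a ∈ Ioo 0 1) (ha' : a ≠ 1 / 2) :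
    0 < bernoulliVarianceProxy a := by
  obtain ⟨h0, h1⟩ := ha
  have h1a : 0 < 1 - a := by linarith
  rcases lt_or_gt_of_ne ha' with h | h
  · exact div_pos_of_neg_of_neg (by linarith)
      (log_neg (by positivity) ((div_lt_one h1a).mpr (by linarith)))
  · exact div_pos (by linarith) (log_pos ((one_lt_div h1a).mpr (by linarith)))

/-- Kearns–Saul inequality. With `L = log (a / (1 - a))` one has
`1 - a + a eˡ = eˡᐟ² cosh ((l + L) / 2) / cosh (L / 2)` and `tanh (L / 2) = 2a - 1`. -/
theorem log_one_sub_add_mul_exp_le {a : ℝ} (ha : a ∈ Ioo 0 1) (ha' : a ≠ 1 / 2) (l : ℝ) :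
    log (1 - a + a * exp l) ≤ a * l + bernoulliVarianceProxy a * l ^ 2 / 2 := by
  obtain ⟨ha0, ha1⟩ := ha
  have h1a : 0 < 1 - a := by linarith
  set L := log (a / (1 - a)) with hL
  have hexpL : exp L = a / (1 - a) := exp_log (by positivity)
  have hL0 : L ≠ 0 := by
    intro hL0
    rw [hL0, exp_zero, eq_div_iff h1a.ne'] at hexpL
    exact ha' (by linarith)
  have hshift (l : ℝ) : 1 - a + a * exp l = (1 - a) * (1 + exp (l + L)) := by
    rw [exp_add, hexpL]
    field_simp
  have hlog : log (1 - a + a * exp l) =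
      l / 2 + (log (cosh ((l + L) / 2)) - log (cosh (L / 2))) := by
    have hone := hshift 0
    rw [exp_zero, mul_one, sub_add_cancel, zero_add] at hone
    have hlogl := congrArg log (hshift l)
    have hlog0 := congrArg log hone
    rw [log_mul h1a.ne' (by positivity), log_one_add_exp] at hlogl hlog0
    rw [log_one] at hlog0
    linarith
  have htanh : tanh (L / 2) = 2 * a - 1 := by
    rw [tanh_half, hexpL]
    field_simp
    ring
  have hcosh := log_cosh_sub_log_cosh_le ((l + L) / 2) (div_ne_zero hL0 two_ne_zero)
  have hbound : tanh (L / 2) / (2 * (L / 2)) * (((l + L) / 2) ^ 2 - (L / 2) ^ 2) =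
      (a - 1 / 2) * l + bernoulliVarianceProxy a * l ^ 2 / 2 := by
    rw [htanh, bernoulliVarianceProxy, ← hL]
    field_simp
    ring
  linarith

theorem mul_le_mul_log_div_sub_add_mul_exp {p q : ℝ} (hp : 0 ≤ p) (hq : 0 < q) (t : ℝ) :
    p * t ≤ p * log (p / q) - p + q * exp t := by
  rcases hp.eq_or_lt with rfl | hp
  · simp only [zero_mul, zero_div, log_zero, sub_zero, zero_add]
    positivity
  have hexp : q * exp t = p * exp (t - log (p / q)) := by
    rw [exp_sub, exp_log (div_pos hp hq)]
    field_simp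
  have := mul_le_mul_of_nonneg_left (add_one_le_exp (t - log (p / q))) hp.le
  rw [hexp]
  linarith

theorem sum_mul_sub_log_sum_mul_exp_le {X : Type*} [Fintype X] {P₀ P₁ : X → ℝ}
    (hP₀ : ∀ x, 0 < P₀ x) (hP₁ : ∀ x, 0 ≤ P₁ x) (hP₁sum : ∑ x, P₁ x = 1) (g : X → ℝ) :
    ∑ x, P₁ x * g x - log (∑ x, P₀ x * exp (g x)) ≤ ∑ x, P₁ x * log (P₁ x / P₀ x) := by
  set Z := ∑ x, P₀ x * exp (g x)
  have hZ : 0 < Z := Finset.sum_pos (fun x _ => mul_pos (hP₀ x) (exp_pos _))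
    (Finset.nonempty_of_sum_ne_zero (by rw [hP₁sum]; exact one_ne_zero))
  have hterm (x : X) : P₁ x * g x - P₁ x * log Z ≤
      P₁ x * log (P₁ x / P₀ x) - P₁ x + P₀ x * exp (g x) / Z := by
    have := mul_le_mul_log_div_sub_add_mul_exp (hP₁ x) (hP₀ x) (g x - log Z)
    rwa [exp_sub, exp_log hZ, mul_sub, ← mul_div_assoc] at this
  have hsum := Finset.sum_le_sum fun x (_ : x ∈ Finset.univ) => hterm x
  rw [Finset.sum_sub_distrib, ← Finset.sum_mul, hP₁sum, Finset.sum_add_distrib,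
    Finset.sum_sub_distrib, hP₁sum, ← Finset.sum_div, div_self hZ.ne'] at hsum
  linarith

theorem sum_mul_exp_mul_eq {X : Type*} [Fintype X] {P Φ : X → ℝ} (hP : ∑ x, P x = 1)
    (hΦ : ∀ x, Φ x = 0 ∨ Φ x = 1) (l : ℝ) :
    ∑ x, P x * exp (l * Φ x) = 1 - ∑ x, P x * Φ x + (∑ x, P x * Φ x) * exp l := by
  have hterm (x : X) : P x * exp (l * Φ x) = P x - P x * Φ x + P x * Φ x * exp l := by
    rcases hΦ x with h | h <;> simp [h]
  simp only [hterm, Finset.sum_add_distrib, Finset.sum_sub_distrib, ← Finset.sum_mul, hP]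

theorem le_sqrt_mul_sqrt_of_forall_mul_sub_le {d s K : ℝ} (hs : 0 < s)
    (h : ∀ l, l * d - s * l ^ 2 / 2 ≤ K) : d ≤ √s * √(2 * K) := by
  rcases le_or_gt d 0 with hd | hd
  · exact hd.trans (by positivity)
  have hK : d ^ 2 ≤ s * (2 * K) := by
    have := h (d / s)
    rw [show d / s * d - s * (d / s) ^ 2 / 2 = d ^ 2 / (2 * s) by field_simp; ring,
      div_le_iff₀ (by positivity)] at this
    linarith
  rw [← sqrt_mul hs.le]
  exact le_sqrt_of_sq_le hK

/-- Classical sub-Gaussian error bound for hypothesis testing: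
`α + β ≥ 1 − √((α−1/2)/ln(α/(1−α)))·√(2 KL(P₁‖P₀))`. -/
theorem classical_error_bound_subgaussian {X : Type*} [Fintype X]
    (P₀ P₁ : X → ℝ)
    (hP₀pos : ∀ x, 0 < P₀ x) (hP₀sum : ∑ x, P₀ x = 1)
    (hP₁nonneg : ∀ x, 0 ≤ P₁ x) (hP₁sum : ∑ x, P₁ x = 1)
    (Φ : X → ℝ) (hΦ : ∀ x, Φ x = 0 ∨ Φ x = 1)
    (α β : ℝ)
    (hα : α = ∑ x, P₀ x * Φ x) (hαmem : α ∈ Set.Ioo (0:ℝ) 1) (hα2 : α ≠ 1/2)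
    (hβ : β = 1 - ∑ x, P₁ x * Φ x) :
    α + β ≥ 1 - Real.sqrt ((α - 1/2) / Real.log (α / (1 - α))) *
      Real.sqrt (2 * ∑ x, P₁ x * Real.log (P₁ x / P₀ x)) := by
  have hdual (l : ℝ) : l * (∑ x, P₁ x * Φ x - α) - bernoulliVarianceProxy α * l ^ 2 / 2 ≤
      ∑ x, P₁ x * log (P₁ x / P₀ x) := by
    have hdv := sum_mul_sub_log_sum_mul_exp_le hP₀pos hP₁nonneg hP₁sum (fun x => l * Φ x)
    rw [sum_mul_exp_mul_eq hP₀sum hΦ, ← hα] at hdv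
    simp only [mul_left_comm _ l, ← Finset.mul_sum] at hdv
    have hks := log_one_sub_add_mul_exp_le hαmem hα2 l
    linarith
  have := le_sqrt_mul_sqrt_of_forall_mul_sub_le (bernoulliVarianceProxy_pos hαmem hα2) hdual
  rw [bernoulliVarianceProxy] at this
  linarith
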